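/- For the chained system ż¹ = v¹, ż^i = z^{i+1}v¹ (i = 2,…,n−1), ż^n = v² with n ≥ 4, the sequence of distributions starting at D₁ = span{∂_{z¹} + Σ_{i=2}^{n−1} z^{i+1}∂_{z^i}, ∂_{z^n}} and defined by D_{j+1} = D_j + [D_j, D_j] satisfies rank D_j = j + 1; the last non-full distribution D_{n−1} has corank 1 and its annihilator is not integrable in general, while the characteristic distribution C(D_{n−2}) of D_{n−2} has corank 3 and its annihilator contains dz¹ and dz². -/

import Mathlib

/-- Vector fields on `ℝⁿ`. -/
abbrev Vec (n : ℕ) := (Fin n → ℝ) → (Fin n → ℝ)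

/-- Lie bracket of vector fields. -/
noncomputable def lieB {n : ℕ} (v w : Vec n) : Vec n :=
  fun x => fderiv ℝ w x (v x) - fderiv ℝ v x (w x)

/-- The `C^∞`-module generated by a set of vector fields. -/
def SmoothSpanV {n : ℕ} (S : Set (Vec n)) : Set (Vec n) :=
  {v | ∃ (k : ℕ) (c : Fin k → (Fin n → ℝ) → ℝ) (w : Fin k → Vec n),
        (∀ l, ContDiff ℝ (⊤ : ℕ∞) (c l)) ∧ (∀ l, w l ∈ S) ∧
        v = fun x => ∑ l, c l x • w l x}

/-- The characteristic distribution `C(D) = { v ∈ D : [v, D] ⊆ D }`. -/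
def CharDist {n : ℕ} (D : Set (Vec n)) : Set (Vec n) :=
  {v | v ∈ D ∧ ∀ w ∈ D, lieB v w ∈ D}

/-- Pointwise evaluation span of a family of vector fields. -/
noncomputable def ptSpan {n : ℕ} (S : Set (Vec n)) (x : Fin n → ℝ) :
    Submodule ℝ (Fin n → ℝ) :=
  Submodule.span ℝ ((fun v : Vec n => v x) '' S)

/-- The `i`-th entry of a coordinate vector, by natural-number index (`0`-based). -/
noncomputable def nth {n : ℕ} (w : Fin n → ℝ) (i : ℕ) : ℝ :=
  if h : i < n then w ⟨i, h⟩ else 0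

/-- First control field of the chained form:
`g₁ = ∂_{z¹} + z³∂_{z²} + ⋯ + zⁿ∂_{z^{n−1}}` (`0`-based coordinates). -/
noncomputable def chainG₁ (n : ℕ) : Vec n :=
  fun z i => if (i : ℕ) = 0 then 1
    else if (i : ℕ) + 1 ≤ n - 1 then nth z ((i : ℕ) + 1) else 0

/-- Second control field of the chained form: `g₂ = ∂_{zⁿ}`. -/
noncomputable def chainG₂ (n : ℕ) : Vec n :=
  fun _ i => if (i : ℕ) = n - 1 then 1 else 0

/-- The sequence `D₁ ⊂ D₂ ⊂ …` with `D_{j+1} = D_j + [D_j, D_j]`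
(`chainD n j` is `D_{j+1}` of the paper, i.e. `chainD n 0 = D₁`). -/
def chainD (n : ℕ) : ℕ → Set (Vec n)
  | 0 => SmoothSpanV {chainG₁ n, chainG₂ n}
  | (j+1) => SmoothSpanV (chainD n j ∪
      {u | ∃ v ∈ chainD n j, ∃ w ∈ chainD n j, u = lieB v w})

/-! ### helpers -/

noncomputable def nthCLM (n i : ℕ) : (Fin n → ℝ) →L[ℝ] ℝ :=
  if h : i < n then ContinuousLinearMap.proj (R := ℝ) (φ := fun _ : Fin n => ℝ) ⟨i, h⟩ else 0

lemma nthCLM_apply {n : ℕ} (i : ℕ) (w : Fin n → ℝ) : nthCLM n i w = nth w i := by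
  unfold nthCLM nth
  split <;> simp

lemma nth_fin {n : ℕ} (w : Fin n → ℝ) (i : Fin n) : nth w (i : ℕ) = w i := by
  unfold nth; rw [dif_pos i.isLt]

lemma nth_ge {n : ℕ} (w : Fin n → ℝ) {i : ℕ} (h : n ≤ i) : nth w i = 0 := by
  unfold nth; rw [dif_neg (by omega)]

lemma nth_sub {n : ℕ} (a b : Fin n → ℝ) (i : ℕ) : nth (a - b) i = nth a i - nth b i := by
  unfold nth; split <;> simp

lemma nth_smul {n : ℕ} (c : ℝ) (a : Fin n → ℝ) (i : ℕ) : nth (c • a) i = c * nth a i := by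
  unfold nth; split <;> simp

lemma nth_sum {n k : ℕ} (f : Fin k → (Fin n → ℝ)) (i : ℕ) :
    nth (∑ l, f l) i = ∑ l, nth (f l) i := by
  unfold nth; split <;> simp

lemma contDiff_nth {n : ℕ} (i : ℕ) : ContDiff ℝ (⊤ : ℕ∞) (fun x : Fin n → ℝ => nth x i) := by
  have : (fun x : Fin n → ℝ => nth x i) = fun x => nthCLM n i x := by
    funext x; rw [nthCLM_apply]
  rw [this]; exact (nthCLM n i).contDiff

lemma contDiff_of_nth {n : ℕ} (v : Vec n)
    (h : ∀ i : ℕ, ContDiff ℝ (⊤ : ℕ∞) (fun x => nth (v x) i)) : ContDiff ℝ (⊤ : ℕ∞) v := by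
  refine contDiff_pi.2 fun i => ?_
  have : (fun x => v x i) = fun x => nth (v x) (i : ℕ) := by
    funext x; rw [nth_fin]
  rw [this]; exact h i

lemma fderiv_nth {n : ℕ} (v : Vec n) {x : Fin n → ℝ} (hv : DifferentiableAt ℝ v x)
    (i : ℕ) (u : Fin n → ℝ) :
    fderiv ℝ (fun y => nth (v y) i) x u = nth (fderiv ℝ v x u) i := by
  have h1 : (fun y => nth (v y) i) = (fun w => nthCLM n i w) ∘ v := by
    funext y; simp [nthCLM_apply]
  rw [h1, fderiv_comp x ((nthCLM n i).differentiableAt) hv]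
  simp [ContinuousLinearMap.fderiv, nthCLM_apply]

/-- standard basis vector field `∂_{z_m}` (0-based). -/
noncomputable def EV (n m : ℕ) : Vec n := fun _ i => if (i : ℕ) = m then 1 else 0

lemma nth_EV {n : ℕ} (m : ℕ) (x : Fin n → ℝ) (i : ℕ) :
    nth (EV n m x) i = if i = m ∧ i < n then 1 else 0 := by
  unfold nth EV
  split
  · rename_i h; by_cases hm : i = m
    · subst hm; simp [h]
    · simp [hm]
  · rename_i h; rw [if_neg (by omega)]

/-- the structural invariant satisfied by members of `chainD n k`. -/
def Pk (n k : ℕ) (v : Vec n) : Prop :=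
  (∀ i : ℕ, ContDiff ℝ (⊤ : ℕ∞) (fun x => nth (v x) i)) ∧
  ∀ (x : Fin n → ℝ) (i : ℕ), 1 ≤ i → i + k ≤ n - 2 →
    nth (v x) i = nth (v x) 0 * nth x (i + 1)

lemma Pk_mono {n k k' : ℕ} (h : k ≤ k') {v : Vec n} (hv : Pk n k v) : Pk n k' v :=
  ⟨hv.1, fun x i h1 h2 => hv.2 x i h1 (by omega)⟩

lemma Pk_contDiff {n k : ℕ} {v : Vec n} (hv : Pk n k v) : ContDiff ℝ (⊤ : ℕ∞) v :=
  contDiff_of_nth v hv.1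

lemma Pk_comb {n k m : ℕ} (c : Fin m → (Fin n → ℝ) → ℝ) (w : Fin m → Vec n)
    (hc : ∀ l, ContDiff ℝ (⊤ : ℕ∞) (c l)) (hw : ∀ l, Pk n k (w l)) :
    Pk n k (fun x => ∑ l, c l x • w l x) := by
  constructor
  · intro i
    have : (fun x => nth (∑ l, c l x • w l x) i) = fun x => ∑ l, c l x * nth (w l x) i := by
      funext x; rw [nth_sum (fun l => c l x • w l x)]
      exact Finset.sum_congr rfl fun l _ => nth_smul _ _ _
    rw [this]
    exact ContDiff.sum fun l _ => (hc l).mul ((hw l).1 i)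
  · intro x i h1 h2
    rw [nth_sum, nth_sum, Finset.sum_mul]
    refine Finset.sum_congr rfl fun l _ => ?_
    rw [nth_smul, nth_smul, (hw l).2 x i h1 h2]; ring

lemma Pk_lieB {n k : ℕ} {v w : Vec n} (hv : Pk n k v) (hw : Pk n k w) :
    Pk n (k + 1) (lieB v w) := by
  have hvC := Pk_contDiff hv
  have hwC := Pk_contDiff hw
  have hvD : ∀ x, DifferentiableAt ℝ v x := fun x => (hvC.differentiable (by simp)) x
  have hwD : ∀ x, DifferentiableAt ℝ w x := fun x => (hwC.differentiable (by simp)) x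
  have comp : ∀ (i : ℕ) (x : Fin n → ℝ), nth (lieB v w x) i =
      fderiv ℝ (fun y => nth (w y) i) x (v x) - fderiv ℝ (fun y => nth (v y) i) x (w x) := by
    intro i x
    rw [fderiv_nth w (hwD x) i, fderiv_nth v (hvD x) i]
    exact nth_sub _ _ _
  constructor
  · intro i
    have : (fun x => nth (lieB v w x) i) = fun x =>
        fderiv ℝ (fun y => nth (w y) i) x (v x) - fderiv ℝ (fun y => nth (v y) i) x (w x) := by
      funext x; exact comp i x
    rw [this]
    have h1 : ContDiff ℝ (⊤ : ℕ∞) (fun x => fderiv ℝ (fun y => nth (w y) i) x (v x)) :=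
      ContDiff.clm_apply ((hw.1 i).fderiv_right (by simp)) hvC
    have h2 : ContDiff ℝ (⊤ : ℕ∞) (fun x => fderiv ℝ (fun y => nth (v y) i) x (w x)) :=
      ContDiff.clm_apply ((hv.1 i).fderiv_right (by simp)) hwC
    exact h1.sub h2
  · intro x i h1 h2
    -- notation: a = v₀, b = w₀
    set a : (Fin n → ℝ) → ℝ := fun y => nth (v y) 0 with ha
    set b : (Fin n → ℝ) → ℝ := fun y => nth (w y) 0 with hb
    have haD : DifferentiableAt ℝ a x := ((hv.1 0).differentiable (by simp)) x
    have hbD : DifferentiableAt ℝ b x := ((hw.1 0).differentiable (by simp)) x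
    have hcoord : ∀ j : ℕ, DifferentiableAt ℝ (fun y : Fin n → ℝ => nth y j) x :=
      fun j => ((contDiff_nth j).differentiable (by simp)) x
    -- rewrite i-th components as products
    have hwi : (fun y => nth (w y) i) = fun y => b y * nth y (i+1) := by
      funext y; exact hw.2 y i h1 (by omega)
    have hvi : (fun y => nth (v y) i) = fun y => a y * nth y (i+1) := by
      funext y; exact hv.2 y i h1 (by omega)
    -- fderiv of coordinate function
    have hfc : ∀ (j : ℕ) (u : Fin n → ℝ), fderiv ℝ (fun y : Fin n → ℝ => nth y j) x u = nth u j := by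
      intro j u
      have : (fun y : Fin n → ℝ => nth y j) = fun y => nthCLM n j y := by
        funext y; rw [nthCLM_apply]
      rw [this, (nthCLM n j).fderiv]
      exact nthCLM_apply j u
    have key : ∀ (c : (Fin n → ℝ) → ℝ) (hc : DifferentiableAt ℝ c x) (u : Fin n → ℝ),
        fderiv ℝ (fun y => c y * nth y (i+1)) x u
          = fderiv ℝ c x u * nth x (i+1) + c x * nth u (i+1) := by
      intro c hc u
      rw [fderiv_fun_mul hc (hcoord (i+1))]
      simp only [ContinuousLinearMap.add_apply, ContinuousLinearMap.smul_apply, smul_eq_mul]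
      rw [hfc (i+1) u]; ring
    rw [comp i x, comp 0 x, hwi, hvi]
    rw [key b hbD (v x), key a haD (w x)]
    have hv1 : nth (v x) (i+1) = a x * nth x (i+2) := by
      exact hv.2 x (i+1) (by omega) (by omega)
    have hw1 : nth (w x) (i+1) = b x * nth x (i+2) := by
      exact hw.2 x (i+1) (by omega) (by omega)
    rw [hv1, hw1]; ring

lemma nth_g₁ {n : ℕ} (z : Fin n → ℝ) (i : ℕ) (h : i < n) :
    nth (chainG₁ n z) i
      = if i = 0 then 1 else if i + 1 ≤ n - 1 then nth z (i + 1) else 0 := by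
  have e : nth (chainG₁ n z) i = if h : i < n then chainG₁ n z ⟨i, h⟩ else 0 := rfl
  rw [e, dif_pos h]; rfl

lemma g₁_comp0 {n : ℕ} (hn : 0 < n) :
    (fun z : Fin n → ℝ => nth (chainG₁ n z) 0) = fun _ => (1 : ℝ) := by
  funext z; rw [nth_g₁ z 0 hn, if_pos rfl]

lemma g₁_comp_mid {n : ℕ} {i : ℕ} (h1 : 1 ≤ i) (h2 : i + 1 ≤ n - 1) :
    (fun z : Fin n → ℝ => nth (chainG₁ n z) i) = fun z => nth z (i + 1) := by
  funext z; rw [nth_g₁ z i (by omega), if_neg (by omega), if_pos h2]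

lemma g₁_comp_hi {n : ℕ} {i : ℕ} (h1 : 1 ≤ i) (h2 : n - 1 ≤ i) :
    (fun z : Fin n → ℝ => nth (chainG₁ n z) i) = fun _ => (0 : ℝ) := by
  funext z
  by_cases h : i < n
  · rw [nth_g₁ z i h, if_neg (by omega), if_neg (by omega)]
  · exact nth_ge _ (by omega)

lemma Pk_chainG₁ {n k : ℕ} (hn : 1 ≤ n) : Pk n k (chainG₁ n) := by
  constructor
  · intro i
    rcases Nat.eq_zero_or_pos i with h0 | h1
    · subst h0; rw [g₁_comp0 hn]; exact contDiff_const
    · by_cases h2 : i + 1 ≤ n - 1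
      · rw [g₁_comp_mid h1 h2]; exact contDiff_nth (i + 1)
      · rw [g₁_comp_hi h1 (by omega)]; exact contDiff_const
  · intro x i h1 h2
    have e0 : nth (chainG₁ n x) 0 = 1 := by
      rw [nth_g₁ x 0 (by omega)]; exact if_pos rfl
    have ei : nth (chainG₁ n x) i = nth x (i + 1) := by
      rw [nth_g₁ x i (by omega), if_neg (by omega), if_pos (by omega)]
    rw [e0, ei, one_mul]

lemma Pk_EV {n k m : ℕ} (hm : 1 ≤ m) (h : n - 1 ≤ m + k) : Pk n k (EV n m) := by
  constructor
  · intro i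
    have : (fun x : Fin n → ℝ => nth (EV n m x) i)
        = fun _ => if i = m ∧ i < n then (1 : ℝ) else 0 := by
      funext x; exact nth_EV m x i
    rw [this]; exact contDiff_const
  · intro x i h1 h2
    rw [nth_EV, nth_EV, if_neg (by omega), if_neg (by omega), zero_mul]

lemma smul_mem_SSV {n : ℕ} {S : Set (Vec n)} {s : Vec n} (hs : s ∈ S)
    (c : (Fin n → ℝ) → ℝ) (hc : ContDiff ℝ (⊤ : ℕ∞) c) :
    (fun x => c x • s x) ∈ SmoothSpanV S :=
  ⟨1, fun _ => c, fun _ => s, fun _ => hc, fun _ => hs, by funext x; simp⟩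

lemma mem_SSV {n : ℕ} {S : Set (Vec n)} {s : Vec n} (hs : s ∈ S) : s ∈ SmoothSpanV S := by
  have := smul_mem_SSV hs (fun _ => 1) contDiff_const
  simpa using this

lemma chainD_subset_succ {n k : ℕ} : chainD n k ⊆ chainD n (k + 1) := fun v hv =>
  mem_SSV (Or.inl hv)

lemma g₁_mem_chainD {n : ℕ} (k : ℕ) : chainG₁ n ∈ chainD n k := by
  induction k with
  | zero => exact mem_SSV (Set.mem_insert _ _)
  | succ k ih => exact chainD_subset_succ ih

lemma nth_zero {n : ℕ} (i : ℕ) : nth (0 : Fin n → ℝ) i = 0 := by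
  unfold nth; split <;> simp

/-- `[g₁, ∂_j] = -∂_{j-1}` for `2 ≤ j ≤ n-1`. -/
lemma lieB_g₁_EV {n j : ℕ} (h2 : 2 ≤ j) (hj : j ≤ n - 1) :
    lieB (chainG₁ n) (EV n j) = fun x => (-1 : ℝ) • EV n (j - 1) x := by
  have hn : 1 ≤ n := by omega
  have hg : ContDiff ℝ (⊤ : ℕ∞) (chainG₁ n) := Pk_contDiff (Pk_chainG₁ (k := 0) hn)
  refine funext fun x => funext fun i => ?_
  have hgD : DifferentiableAt ℝ (chainG₁ n) x := (hg.differentiable (by simp)) x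
  have hEc : fderiv ℝ (EV n j) x = 0 := fderiv_const_apply _
  have hkey : nth (lieB (chainG₁ n) (EV n j) x) (i : ℕ)
      = - fderiv ℝ (fun y => nth (chainG₁ n y) (i : ℕ)) x (EV n j x) := by
    show nth (fderiv ℝ (EV n j) x (chainG₁ n x) - fderiv ℝ (chainG₁ n) x (EV n j x)) (i:ℕ) = _
    rw [nth_sub, fderiv_nth (chainG₁ n) hgD, hEc]
    rw [ContinuousLinearMap.zero_apply, nth_zero, zero_sub]
  have lhs : lieB (chainG₁ n) (EV n j) x i = nth (lieB (chainG₁ n) (EV n j) x) (i : ℕ) :=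
    (nth_fin _ i).symm
  rw [lhs, hkey]
  have rhs : ((-1 : ℝ) • EV n (j-1) x) i = (if (i : ℕ) = j - 1 then (-1:ℝ) else 0) := by
    by_cases hij : (i:ℕ) = j - 1 <;> simp [EV, hij]
  rw [rhs]
  rcases Nat.eq_zero_or_pos (i : ℕ) with h0 | h1
  · rw [h0, g₁_comp0 hn, if_neg (show ¬(0 = j - 1) by omega)]
    simp
  · by_cases hmid : (i : ℕ) + 1 ≤ n - 1
    · rw [g₁_comp_mid h1 hmid]
      have : (fun z : Fin n → ℝ => nth z ((i:ℕ) + 1)) = fun z => nthCLM n ((i:ℕ)+1) z := by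
        funext z; rw [nthCLM_apply]
      rw [this, (nthCLM n ((i:ℕ)+1)).fderiv, nthCLM_apply, nth_EV]
      by_cases hij : (i : ℕ) = j - 1
      · rw [if_pos (⟨by omega, by omega⟩ : (i:ℕ) + 1 = j ∧ (i:ℕ) + 1 < n), if_pos hij]
      · simp [hij, show ¬((i:ℕ) + 1 = j) by omega]
    · rw [g₁_comp_hi h1 (by omega), if_neg (show ¬((i:ℕ) = j - 1) by omega)]
      simp

lemma EV_mem_chainD {n : ℕ} (hn : 4 ≤ n) : ∀ k m : ℕ, 1 ≤ m → n - 1 ≤ m + k → m ≤ n - 1 →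
    EV n m ∈ chainD n k := by
  intro k
  induction k with
  | zero =>
    intro m h1 h2 h3
    obtain rfl : m = n - 1 := by omega
    exact mem_SSV (Set.mem_insert_of_mem _ rfl)
  | succ k ih =>
    intro m h1 h2 h3
    by_cases hm : n - 1 ≤ m + k
    · exact chainD_subset_succ (ih m h1 hm h3)
    · have hb : lieB (chainG₁ n) (EV n (m+1)) ∈ chainD n k ∪
          {u | ∃ v ∈ chainD n k, ∃ w ∈ chainD n k, u = lieB v w} :=
        Or.inr ⟨chainG₁ n, g₁_mem_chainD k, EV n (m+1),
          ih (m+1) (by omega) (by omega) (by omega), rfl⟩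
      have hmem := smul_mem_SSV hb (fun _ => (-1:ℝ)) contDiff_const
      have heq : (fun x => (-1:ℝ) • lieB (chainG₁ n) (EV n (m+1)) x) = EV n m := by
        rw [lieB_g₁_EV (by omega) (by omega)]
        funext x i
        simp
      show EV n m ∈ SmoothSpanV _
      rw [← heq]
      exact hmem

lemma Pk_SSV {n k : ℕ} {S : Set (Vec n)} (hS : ∀ s ∈ S, Pk n k s) :
    ∀ v ∈ SmoothSpanV S, Pk n k v := by
  rintro v ⟨m, c, w, hc, hw, rfl⟩
  exact Pk_comb c w hc (fun l => hS _ (hw l))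

lemma Pk_chainD {n : ℕ} (hn : 4 ≤ n) : ∀ k, ∀ v ∈ chainD n k, Pk n k v := by
  intro k
  induction k with
  | zero =>
    refine Pk_SSV ?_
    rintro s (rfl | rfl)
    · exact Pk_chainG₁ (by omega)
    · exact Pk_EV (m := n - 1) (by omega) (by omega)
  | succ k ih =>
    refine Pk_SSV ?_
    rintro s (hs | ⟨a, ha, b, hb, rfl⟩)
    · exact Pk_mono (by omega) (ih s hs)
    · exact Pk_lieB (ih a ha) (ih b hb)

lemma mem_chainD_of_Pk {n : ℕ} (hn : 4 ≤ n) {k : ℕ} (hk1 : 1 ≤ k) (hk : k ≤ n - 2)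
    {v : Vec n} (hv : Pk n k v) : v ∈ chainD n k := by
  obtain ⟨k', rfl⟩ : ∃ k', k = k' + 1 := ⟨k - 1, by omega⟩
  set γ : ℕ → (Fin n → ℝ) → ℝ := fun m x => nth (v x) m - nth (v x) 0 * nth x (m+1) with hγ
  have hγs : ∀ m, ContDiff ℝ (⊤ : ℕ∞) (γ m) :=
    fun m => ((hv.1 m).sub ((hv.1 0).mul (contDiff_nth (m+1))))
  set c : Fin (n+1) → (Fin n → ℝ) → ℝ :=
    Fin.cases (fun x => nth (v x) 0)
      (fun j => if n -  (k'+1) ≤ (j:ℕ) then γ (j:ℕ)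
        else if (j:ℕ) = n - 1 -  (k'+1) then (fun x => -(γ (j:ℕ) x)) else fun _ => 0) with hc
  set w : Fin (n+1) → Vec n :=
    Fin.cases (chainG₁ n)
      (fun j => if n -  (k'+1) ≤ (j:ℕ) then EV n (j:ℕ)
        else if (j:ℕ) = n - 1 -  (k'+1) then lieB (chainG₁ n) (EV n (n -  (k'+1))) else chainG₁ n) with hw
  refine ⟨n+1, c, w, ?_, ?_, ?_⟩
  · intro l
    induction l using Fin.cases with
    | zero => simpa [hc] using hv.1 0
    | succ j =>
      simp only [hc, Fin.cases_succ]
      split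
      · exact hγs _
      · split
        · exact (hγs _).neg
        · exact contDiff_const
  · intro l
    show w l ∈ chainD n k' ∪ {u | ∃ a ∈ chainD n k', ∃ b ∈ chainD n k', u = lieB a b}
    induction l using Fin.cases with
    | zero => exact Or.inl (g₁_mem_chainD k')
    | succ j =>
      simp only [hw, Fin.cases_succ]
      split
      · rename_i hj
        exact Or.inl (EV_mem_chainD hn k' (j:ℕ) (by omega) (by omega) (by omega))
      · split
        · exact Or.inr ⟨chainG₁ n, g₁_mem_chainD k', EV n (n -  (k'+1)),
            EV_mem_chainD hn k' (n -  (k'+1)) (by omega) (by omega) (by omega), rfl⟩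
        · exact Or.inl (g₁_mem_chainD k')
  · funext x
    rw [Fin.sum_univ_succ]
    simp only [hc, hw, Fin.cases_zero, Fin.cases_succ]
    -- compute the sum over j : Fin n
    have hterm : ∀ j : Fin n,
        ((if n -  (k'+1) ≤ (j:ℕ) then γ (j:ℕ)
          else if (j:ℕ) = n - 1 -  (k'+1) then (fun x => -(γ (j:ℕ) x)) else fun _ => 0) x)
        • ((if n -  (k'+1) ≤ (j:ℕ) then EV n (j:ℕ)
          else if (j:ℕ) = n - 1 -  (k'+1) then lieB (chainG₁ n) (EV n (n -  (k'+1))) else chainG₁ n) x)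
        = if n - 1 -  (k'+1) ≤ (j:ℕ) then γ (j:ℕ) x • EV n (j:ℕ) x else 0 := by
      intro j
      by_cases h1 : n -  (k'+1) ≤ (j:ℕ)
      · rw [if_pos h1, if_pos h1, if_pos (by omega)]
      · rw [if_neg h1, if_neg h1]
        by_cases h2 : (j:ℕ) = n - 1 -  (k'+1)
        · rw [if_pos h2, if_pos h2, if_pos (by omega)]
          rw [lieB_g₁_EV (by omega) (by omega)]
          have : n -  (k'+1) - 1 = n - 1 -  (k'+1) := by omega
          rw [this, h2]
          funext i
          simp
        · rw [if_neg h2, if_neg h2, if_neg (by omega)]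
          simp
    rw [Finset.sum_congr rfl (fun j _ => hterm j)]
    -- now the sum has a single surviving term
    funext i
    have hsum : (∑ j : Fin n, (if n - 1 -  (k'+1) ≤ (j:ℕ) then γ (j:ℕ) x • EV n (j:ℕ) x else 0)) i
        = if n - 1 -  (k'+1) ≤ (i:ℕ) then γ (i:ℕ) x else 0 := by
      rw [Finset.sum_apply]
      rw [Finset.sum_eq_single i]
      · by_cases h : n - 1 -  (k'+1) ≤ (i:ℕ)
        · rw [if_pos h, if_pos h]; simp [EV]
        · rw [if_neg h, if_neg h]; rfl
      · intro b _ hb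
        by_cases h : n - 1 -  (k'+1) ≤ (b:ℕ)
        · rw [if_pos h]
          have hbi : ¬((i:ℕ) = (b:ℕ)) := fun hh => hb (Fin.ext hh.symm)
          simp [EV, hbi]
        · rw [if_neg h]; rfl
      · intro hi; exact absurd (Finset.mem_univ i) hi
    rw [Pi.add_apply, hsum]
    -- final scalar identity
    have hg₁i : (1 ≤ (i:ℕ) ∧ chainG₁ n x i = nth x ((i:ℕ)+1)) ∨ ((i:ℕ) = 0 ∧ chainG₁ n x i = 1) := by
      by_cases h0 : (i:ℕ) = 0
      · right; exact ⟨h0, by simp [chainG₁, h0]⟩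
      · left
        refine ⟨by omega, ?_⟩
        by_cases h2 : (i:ℕ) + 1 ≤ n - 1
        · simp [chainG₁, h0, h2]
        · have hi : (i:ℕ) = n - 1 := by have := i.isLt; omega
          have : nth x ((i:ℕ)+1) = 0 := nth_ge _ (by omega)
          rw [this]; simp [chainG₁, h0, h2]
    show v x i = nth (v x) 0 • chainG₁ n x i + _
    by_cases hcase : n - 1 -  (k'+1) ≤ (i:ℕ)
    · rw [if_pos hcase]
      rcases hg₁i with ⟨h1, h⟩ | ⟨h0, _⟩
      · rw [h]
        have : v x i = nth (v x) (i:ℕ) := (nth_fin _ _).symm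
        rw [this, hγ]
        simp
      · omega  -- i = 0 but n - 1 -  (k'+1) ≥ 1 since  (k'+1) ≤ n - 2
    · rw [if_neg hcase, add_zero]
      rcases hg₁i with ⟨hi1, h⟩ | ⟨h0, h1⟩
      · rw [h]
        have hv2 := hv.2 x (i:ℕ) (by omega) (by omega)
        rw [← nth_fin (v x) i, hv2]
        rfl
      · rw [h1]
        rw [← nth_fin (v x) i, h0]
        simp

/-- truncated `g₁`: the part of `g₁` not in the span of the `∂`'s of level `k`. -/
noncomputable def truncG (n k : ℕ) : Vec n :=
  fun z i => if (i:ℕ) = 0 then 1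
    else if 1 ≤ (i:ℕ) ∧ (i:ℕ) + k ≤ n - 2 then nth z ((i:ℕ)+1) else 0

/-- the pointwise frame of `chainD n k`. -/
noncomputable def famF (n k : ℕ) (x : Fin n → ℝ) : Fin (k+2) → (Fin n → ℝ) :=
  fun l => if (l:ℕ) = 0 then truncG n k x
    else fun i => if (i:ℕ) = n - 2 - k + (l:ℕ) then 1 else 0

lemma nth_truncG {n k : ℕ} (z : Fin n → ℝ) {i : ℕ} (h : i < n) :
    nth (truncG n k z) i
      = if i = 0 then 1 else if 1 ≤ i ∧ i + k ≤ n - 2 then nth z (i+1) else 0 := by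
  have e : nth (truncG n k z) i = if h : i < n then truncG n k z ⟨i, h⟩ else 0 := rfl
  rw [e, dif_pos h]; rfl

lemma Pk_truncG {n k : ℕ} (hn : 1 ≤ n) : Pk n k (truncG n k) := by
  constructor
  · intro i
    by_cases h : i < n
    · have e : (fun x : Fin n → ℝ => nth (truncG n k x) i)
          = fun x => if i = 0 then 1 else if 1 ≤ i ∧ i + k ≤ n - 2 then nth x (i+1) else 0 := by
        funext x; exact nth_truncG x h
      rw [e]
      by_cases h0 : i = 0
      · simp only [h0, if_pos rfl]; exact contDiff_const
      · by_cases h1 : 1 ≤ i ∧ i + k ≤ n - 2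
        · simp only [if_neg h0, if_pos h1]; exact contDiff_nth (i+1)
        · simp only [if_neg h0, if_neg h1]; exact contDiff_const
    · have e : (fun x : Fin n → ℝ => nth (truncG n k x) i) = fun _ => 0 := by
        funext x; exact nth_ge _ (by omega)
      rw [e]; exact contDiff_const
  · intro x i h1 h2
    rw [nth_truncG x (by omega), nth_truncG x (by omega)]
    rw [if_neg (by omega), if_pos ⟨h1, h2⟩, if_pos rfl, one_mul]

lemma truncG_mem_chainD {n : ℕ} (hn : 4 ≤ n) {k : ℕ} (hk : k ≤ n - 2) :
    truncG n k ∈ chainD n k := by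
  rcases Nat.eq_zero_or_pos k with rfl | hk1
  · have e : truncG n 0 = chainG₁ n := by
      funext z i
      show (if (i:ℕ) = 0 then 1 else if 1 ≤ (i:ℕ) ∧ (i:ℕ) + 0 ≤ n - 2 then nth z ((i:ℕ)+1) else 0)
        = (if (i:ℕ) = 0 then 1 else if (i:ℕ) + 1 ≤ n - 1 then nth z ((i:ℕ)+1) else 0)
      by_cases h0 : (i:ℕ) = 0
      · rw [if_pos h0, if_pos h0]
      · rw [if_neg h0, if_neg h0]
        by_cases h1 : (i:ℕ) + 1 ≤ n - 1
        · rw [if_pos ⟨by omega, by omega⟩, if_pos h1]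
        · rw [if_neg (by omega), if_neg h1]
    rw [e]; exact g₁_mem_chainD 0
  · exact mem_chainD_of_Pk hn hk1 hk (Pk_truncG (by omega))

lemma famF_mem {n : ℕ} (hn : 4 ≤ n) {k : ℕ} (hk : k ≤ n - 2) (x : Fin n → ℝ) (l : Fin (k+2)) :
    famF n k x l ∈ (fun v : Vec n => v x) '' (chainD n k) := by
  by_cases h0 : (l:ℕ) = 0
  · refine ⟨truncG n k, truncG_mem_chainD hn hk, ?_⟩
    show truncG n k x = famF n k x l
    unfold famF; rw [if_pos h0]
  · refine ⟨EV n (n - 2 - k + (l:ℕ)), EV_mem_chainD hn k _ (by omega) (by omega)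
      (by have := l.isLt; omega), ?_⟩
    show EV n (n - 2 - k + (l:ℕ)) x = famF n k x l
    unfold famF; rw [if_neg h0]; rfl

lemma nth_add {n : ℕ} (a b : Fin n → ℝ) (i : ℕ) : nth (a + b) i = nth a i + nth b i := by
  unfold nth; split <;> simp

noncomputable def phiL (n k : ℕ) : (Fin n → ℝ) →ₗ[ℝ] (Fin (k+2) → ℝ) where
  toFun u := fun l => if (l:ℕ) = 0 then nth u 0 else nth u (n - 2 - k + (l:ℕ))
  map_add' a b := by funext l; by_cases h : l = 0 <;> simp [h, nth_add]
  map_smul' c a := by funext l; by_cases h : l = 0 <;> simp [h, nth_smul]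

lemma phi_famF {n k : ℕ} (hn : 4 ≤ n) (hk : k ≤ n - 2) (x : Fin n → ℝ) (l : Fin (k+2)) :
    phiL n k (famF n k x l) = Pi.single l 1 := by
  funext l'
  rw [Pi.single_apply]
  show (if (l':ℕ) = 0 then nth (famF n k x l) 0 else nth (famF n k x l) (n - 2 - k + (l':ℕ)))
      = if l' = l then 1 else 0
  by_cases h0 : (l:ℕ) = 0
  · have e : famF n k x l = truncG n k x := by unfold famF; rw [if_pos h0]
    rw [e]
    by_cases h0' : (l':ℕ) = 0
    · rw [if_pos h0', nth_truncG x (by omega), if_pos rfl,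
        if_pos (Fin.ext (by omega) : l' = l)]
    · rw [if_neg h0', if_neg (fun he : l' = l => h0' (by rw [he, h0]))]
      have hi : n - 2 - k + (l':ℕ) < n := by have := l'.isLt; omega
      rw [nth_truncG x hi, if_neg (by omega), if_neg (by omega)]
  · have e : famF n k x l = EV n (n - 2 - k + (l:ℕ)) x := by unfold famF; rw [if_neg h0]; rfl
    rw [e]
    by_cases h0' : (l':ℕ) = 0
    · rw [if_pos h0', nth_EV, if_neg (by omega),
        if_neg (fun he : l' = l => h0 (by rw [← he, h0']))]
    · rw [if_neg h0', nth_EV]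
      by_cases hll : l' = l
      · rw [if_pos hll, if_pos ⟨by rw [hll], by have := l'.isLt; omega⟩]
      · rw [if_neg hll, if_neg (by
          rintro ⟨he, -⟩
          exact hll (Fin.ext (by omega)))]

lemma famF_li {n k : ℕ} (hn : 4 ≤ n) (hk : k ≤ n - 2) (x : Fin n → ℝ) :
    LinearIndependent ℝ (famF n k x) := by
  apply LinearIndependent.of_comp (phiL n k)
  have e : (⇑(phiL n k) ∘ famF n k x) = fun l => (Pi.single l 1 : Fin (k+2) → ℝ) :=
    funext (phi_famF hn hk x)
  rw [e]
  have h2 : (fun l => (Pi.single l 1 : Fin (k+2) → ℝ)) = ⇑(Pi.basisFun ℝ (Fin (k+2))) := by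
    funext l; simp [Pi.basisFun_apply]
  rw [h2]
  exact (Pi.basisFun ℝ (Fin (k+2))).linearIndependent

lemma ptSpan_chainD {n : ℕ} (hn : 4 ≤ n) {k : ℕ} (hk : k ≤ n - 2) (x : Fin n → ℝ) :
    ptSpan (chainD n k) x = Submodule.span ℝ (Set.range (famF n k x)) := by
  apply le_antisymm
  · apply Submodule.span_le.2
    rintro _ ⟨v, hv, rfl⟩
    have hvP := Pk_chainD hn k v hv
    have key : v x = ∑ l : Fin (k+2),
        (if (l:ℕ) = 0 then nth (v x) 0 else nth (v x) (n - 2 - k + (l:ℕ))) • famF n k x l := by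
      funext i
      rw [Finset.sum_apply, Fin.sum_univ_succ]
      simp only [Fin.val_zero, Fin.val_succ]
      rw [if_pos trivial]
      have e0 : famF n k x 0 = truncG n k x := by
        unfold famF; rw [if_pos (by simp : ((0 : Fin (k+2)):ℕ) = 0)]
      have es : ∀ j : Fin (k+1), famF n k x j.succ = EV n (n - 2 - k + ((j:ℕ)+1)) x := by
        intro j; unfold famF; rw [if_neg (by simp [Fin.val_succ])]; rfl
      rw [e0]
      have etail : ∀ j : Fin (k+1),
          ((if (j:ℕ) + 1 = 0 then nth (v x) 0 else nth (v x) (n - 2 - k + ((j:ℕ)+1)))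
            • famF n k x j.succ) i
          = nth (v x) (n - 2 - k + ((j:ℕ)+1)) * EV n (n - 2 - k + ((j:ℕ)+1)) x i := by
        intro j
        rw [if_neg (by omega), es j]; rfl
      rw [Finset.sum_congr rfl (fun j _ => etail j)]
      by_cases hge : n - 1 - k ≤ (i:ℕ)
      · have hlt : (i:ℕ) - (n - 1 - k) < k + 1 := by have := i.isLt; omega
        rw [Finset.sum_eq_single (⟨(i:ℕ) - (n - 1 - k), hlt⟩ : Fin (k+1))]
        · have hm : n - 2 - k + (((⟨(i:ℕ) - (n - 1 - k), hlt⟩ : Fin (k+1)):ℕ) + 1) = (i:ℕ) := by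
            simp only [Fin.val_mk]; omega
          rw [hm]
          have hEV : EV n (i:ℕ) x i = 1 := by simp [EV]
          rw [hEV, mul_one]
          have htr : truncG n k x i = 0 := by
            show (if (i:ℕ) = 0 then 1 else if 1 ≤ (i:ℕ) ∧ (i:ℕ) + k ≤ n - 2 then nth x ((i:ℕ)+1) else 0) = 0
            rw [if_neg (by omega), if_neg (by omega)]
          rw [Pi.smul_apply, htr, smul_zero, zero_add, ← nth_fin (v x) i]
        · intro b _ hb
          have hEV : EV n (n - 2 - k + ((b:ℕ)+1)) x i = 0 := by
            show (if (i:ℕ) = n - 2 - k + ((b:ℕ)+1) then (1:ℝ) else 0) = 0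
            rw [if_neg (fun he => hb (Fin.ext (by simp only [Fin.val_mk]; omega)))]
          rw [hEV, mul_zero]
        · intro hmem; exact absurd (Finset.mem_univ _) hmem
      · have hz : ∀ b : Fin (k+1),
            nth (v x) (n - 2 - k + ((b:ℕ)+1)) * EV n (n - 2 - k + ((b:ℕ)+1)) x i = 0 := by
          intro b
          have hEV : EV n (n - 2 - k + ((b:ℕ)+1)) x i = 0 := by
            show (if (i:ℕ) = n - 2 - k + ((b:ℕ)+1) then (1:ℝ) else 0) = 0
            rw [if_neg (by omega)]
          rw [hEV, mul_zero]
        rw [Finset.sum_eq_zero (fun b _ => hz b), add_zero, Pi.smul_apply]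
        by_cases h0 : (i:ℕ) = 0
        · have htr : truncG n k x i = 1 := by
            show (if (i:ℕ) = 0 then (1:ℝ) else _) = 1
            rw [if_pos h0]
          rw [htr, smul_eq_mul, mul_one, ← nth_fin (v x) i, h0]
        · have htr : truncG n k x i = nth x ((i:ℕ)+1) := by
            show (if (i:ℕ) = 0 then 1 else if 1 ≤ (i:ℕ) ∧ (i:ℕ) + k ≤ n - 2 then nth x ((i:ℕ)+1) else 0) = _
            rw [if_neg h0, if_pos ⟨by omega, by omega⟩]
          rw [htr, smul_eq_mul, ← hvP.2 x (i:ℕ) (by omega) (by omega), nth_fin]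
    have hmem : v x ∈ Submodule.span ℝ (Set.range (famF n k x)) := by
      rw [key]
      exact Submodule.sum_mem _ (fun l _ => Submodule.smul_mem _ _
        (Submodule.subset_span (Set.mem_range_self l)))
    exact hmem
  · apply Submodule.span_le.2
    rintro _ ⟨l, rfl⟩
    exact Submodule.subset_span (famF_mem hn hk x l)

lemma finrank_chainD {n : ℕ} (hn : 4 ≤ n) {k : ℕ} (hk : k ≤ n - 2) (x : Fin n → ℝ) :
    Module.finrank ℝ (ptSpan (chainD n k) x) = k + 2 := by
  rw [ptSpan_chainD hn hk x, finrank_span_eq_card (famF_li hn hk x), Fintype.card_fin]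

lemma fderiv_coord {n : ℕ} (m : ℕ) (x : Fin n → ℝ) :
    fderiv ℝ (fun y : Fin n → ℝ => nth y m) x = nthCLM n m := by
  have e : (fun y : Fin n → ℝ => nth y m) = fun y => nthCLM n m y := by
    funext y; rw [nthCLM_apply]
  rw [e, (nthCLM n m).fderiv]

lemma fderiv_mul_coord {n : ℕ} {a : (Fin n → ℝ) → ℝ} {x : Fin n → ℝ}
    (ha : DifferentiableAt ℝ a x) (m : ℕ) (u : Fin n → ℝ) :
    fderiv ℝ (fun y => a y * nth y m) x u
      = fderiv ℝ a x u * nth x m + a x * nth u m := by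
  rw [fderiv_fun_mul ha (((contDiff_nth m).differentiable (by simp)) x)]
  simp only [ContinuousLinearMap.add_apply, ContinuousLinearMap.smul_apply, smul_eq_mul]
  rw [fderiv_coord, nthCLM_apply]; ring

lemma nth_lieB {n : ℕ} {v w : Vec n} (hv : ContDiff ℝ (⊤ : ℕ∞) v) (hw : ContDiff ℝ (⊤ : ℕ∞) w)
    (x : Fin n → ℝ) (i : ℕ) :
    nth (lieB v w x) i = fderiv ℝ (fun y => nth (w y) i) x (v x)
      - fderiv ℝ (fun y => nth (v y) i) x (w x) := by
  show nth (fderiv ℝ w x (v x) - fderiv ℝ v x (w x)) i = _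
  rw [nth_sub, fderiv_nth w ((hw.differentiable (by simp)) x) i,
    fderiv_nth v ((hv.differentiable (by simp)) x) i]

lemma contDiff_EV {n m : ℕ} : ContDiff ℝ (⊤ : ℕ∞) (EV n m) := contDiff_const

/-- components 0, 1, 2 of any characteristic field vanish. -/
lemma charDist_zero012 {n : ℕ} (hn : 4 ≤ n) {v : Vec n}
    (hv : v ∈ CharDist (chainD n (n - 3))) :
    ∀ x, nth (v x) 0 = 0 ∧ nth (v x) 1 = 0 ∧ nth (v x) 2 = 0 := by
  obtain ⟨hvD, hbr⟩ := hv
  have hvP : Pk n (n-3) v := Pk_chainD hn (n-3) v hvD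
  have hvC : ContDiff ℝ (⊤ : ℕ∞) v := Pk_contDiff hvP
  have hv1 : ∀ x, nth (v x) 1 = nth (v x) 0 * nth x 2 :=
    fun x => hvP.2 x 1 le_rfl (by omega)
  have h0 : ∀ x, nth (v x) 0 = 0 := by
    intro x
    have hE2 : EV n 2 ∈ chainD n (n-3) :=
      EV_mem_chainD hn (n-3) 2 (by omega) (by omega) (by omega)
    have huP := Pk_chainD hn (n-3) _ (hbr _ hE2)
    have hreln := huP.2 x 1 le_rfl (by omega)
    rw [nth_lieB hvC contDiff_EV, nth_lieB hvC contDiff_EV] at hreln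
    have hE2c : ∀ i : ℕ, (fun y => nth (EV n 2 y) i) = fun _ => nth (EV n 2 x) i := by
      intro i; funext y; rfl
    rw [hE2c 1, hE2c 0, fderiv_const_apply, fderiv_const_apply] at hreln
    have hvf1 : (fun y => nth (v y) 1) = fun y => nth (v y) 0 * nth y 2 := funext hv1
    rw [hvf1, fderiv_mul_coord (((hvP.1 0).differentiable (by simp)) x) 2 (EV n 2 x)] at hreln
    have he22 : nth (EV n 2 x) 2 = 1 := by rw [nth_EV, if_pos ⟨rfl, by omega⟩]
    rw [he22, mul_one] at hreln
    simp only [ContinuousLinearMap.zero_apply, zero_sub] at hreln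
    -- hreln : -(D v0 (e2) * x2 + v0 x) = (-(D v0 (e2))) * x2
    nlinarith [hreln]
  refine fun x => ⟨h0 x, by rw [hv1 x, h0 x, zero_mul], ?_⟩
  -- component 2 vanishes, via bracket with g₁
  have hg₁D : chainG₁ n ∈ chainD n (n-3) := g₁_mem_chainD _
  have hgC : ContDiff ℝ (⊤ : ℕ∞) (chainG₁ n) := Pk_contDiff (Pk_chainG₁ (k := 0) (by omega))
  have huP := Pk_chainD hn (n-3) _ (hbr _ hg₁D)
  have hreln := huP.2 x 1 le_rfl (by omega)
  rw [nth_lieB hvC hgC, nth_lieB hvC hgC] at hreln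
  have hvf1 : (fun y => nth (v y) 1) = fun _ => (0:ℝ) :=
    funext fun y => by rw [hv1 y, h0 y, zero_mul]
  have hvf0 : (fun y => nth (v y) 0) = fun _ => (0:ℝ) := funext h0
  rw [hvf1, hvf0, fderiv_const_apply, g₁_comp_mid le_rfl (by omega),
    g₁_comp0 (by omega), fderiv_const_apply, fderiv_coord] at hreln
  simp only [ContinuousLinearMap.zero_apply, nthCLM_apply, sub_zero, zero_sub, neg_zero,
    zero_mul] at hreln
  exact hreln

/-- sufficient condition for membership in the characteristic distribution. -/
lemma mem_charDist {n : ℕ} (hn : 4 ≤ n) {v : Vec n} (hvP : Pk n (n-3) v)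
    (h0 : ∀ x, nth (v x) 0 = 0) (h2 : ∀ x, nth (v x) 2 = 0) :
    v ∈ CharDist (chainD n (n-3)) := by
  have hvC : ContDiff ℝ (⊤ : ℕ∞) v := Pk_contDiff hvP
  have hv1 : ∀ x, nth (v x) 1 = 0 := fun x => by
    rw [hvP.2 x 1 le_rfl (by omega), h0, zero_mul]
  constructor
  · exact mem_chainD_of_Pk hn (by omega) (by omega) hvP
  · intro w hw
    have hwP := Pk_chainD hn _ w hw
    have hwC : ContDiff ℝ (⊤ : ℕ∞) w := Pk_contDiff hwP
    apply mem_chainD_of_Pk hn (by omega) (by omega)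
    have hbr := Pk_lieB hvP hwP
    refine ⟨hbr.1, ?_⟩
    intro x i hi1 hi2
    obtain rfl : i = 1 := by omega
    rw [nth_lieB hvC hwC, nth_lieB hvC hwC]
    have hw1 : (fun y => nth (w y) 1) = fun y => nth (w y) 0 * nth y 2 :=
      funext fun y => hwP.2 y 1 le_rfl (by omega)
    have hv1f : (fun y => nth (v y) 1) = fun _ => (0:ℝ) := funext hv1
    have hv0f : (fun y => nth (v y) 0) = fun _ => (0:ℝ) := funext h0
    rw [hw1, hv1f, hv0f, fderiv_const_apply,
      fderiv_mul_coord (((hwP.1 0).differentiable (by simp)) x) 2 (v x), h2]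
    simp only [ContinuousLinearMap.zero_apply, mul_zero, add_zero, sub_zero]

/-- the pointwise frame of the characteristic distribution. -/
noncomputable def famC (n : ℕ) : Fin (n-3) → (Fin n → ℝ) :=
  fun l => fun i => if (i:ℕ) = (l:ℕ) + 3 then 1 else 0

lemma EV_mem_charDist {n : ℕ} (hn : 4 ≤ n) {m : ℕ} (hm3 : 3 ≤ m) (hm : m ≤ n - 1) :
    EV n m ∈ CharDist (chainD n (n-3)) := by
  apply mem_charDist hn (Pk_EV (by omega) (by omega))
  · intro x; rw [nth_EV, if_neg (by omega)]
  · intro x; rw [nth_EV, if_neg (by omega)]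

noncomputable def phiC (n : ℕ) : (Fin n → ℝ) →ₗ[ℝ] (Fin (n-3) → ℝ) where
  toFun u := fun l => nth u ((l:ℕ) + 3)
  map_add' a b := by funext l; simp [nth_add]
  map_smul' c a := by funext l; simp [nth_smul]

lemma famC_li {n : ℕ} (hn : 4 ≤ n) : LinearIndependent ℝ (famC n) := by
  apply LinearIndependent.of_comp (phiC n)
  have e : (⇑(phiC n) ∘ famC n) = fun l => (Pi.single l 1 : Fin (n-3) → ℝ) := by
    funext l l'
    rw [Function.comp_apply, Pi.single_apply]
    show nth (famC n l) ((l':ℕ) + 3) = _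
    have hlt : (l':ℕ) + 3 < n := by have := l'.isLt; omega
    have : nth (famC n l) ((l':ℕ)+3)
        = if (l':ℕ) + 3 = (l:ℕ) + 3 then (1:ℝ) else 0 := by
      unfold nth famC; rw [dif_pos hlt]
    rw [this]
    by_cases hll : l' = l
    · rw [if_pos (by rw [hll]), if_pos hll]
    · rw [if_neg (fun he => hll (Fin.ext (by omega))), if_neg hll]
  rw [e]
  have h2 : (fun l => (Pi.single l 1 : Fin (n-3) → ℝ)) = ⇑(Pi.basisFun ℝ (Fin (n-3))) := by
    funext l; simp [Pi.basisFun_apply]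
  rw [h2]
  exact (Pi.basisFun ℝ (Fin (n-3))).linearIndependent

lemma ptSpan_charDist {n : ℕ} (hn : 4 ≤ n) (x : Fin n → ℝ) :
    ptSpan (CharDist (chainD n (n-3))) x = Submodule.span ℝ (Set.range (famC n)) := by
  apply le_antisymm
  · apply Submodule.span_le.2
    rintro _ ⟨v, hv, rfl⟩
    have hz0 : ∀ y, nth (v y) 0 = 0 := fun y => (charDist_zero012 hn hv y).1
    have hz1 : ∀ y, nth (v y) 1 = 0 := fun y => (charDist_zero012 hn hv y).2.1
    have hz2 : ∀ y, nth (v y) 2 = 0 := fun y => (charDist_zero012 hn hv y).2.2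
    have key : v x = ∑ l : Fin (n-3), nth (v x) ((l:ℕ)+3) • famC n l := by
      funext i
      rw [Finset.sum_apply]
      by_cases hge : 3 ≤ (i:ℕ)
      · have hlt : (i:ℕ) - 3 < n - 3 := by have := i.isLt; omega
        rw [Finset.sum_eq_single (⟨(i:ℕ) - 3, hlt⟩ : Fin (n-3))]
        · have e1 : famC n ⟨(i:ℕ)-3, hlt⟩ i = 1 := by
            show (if (i:ℕ) = ((⟨(i:ℕ)-3, hlt⟩ : Fin (n-3)):ℕ) + 3 then (1:ℝ) else 0) = 1
            rw [if_pos (by simp only [Fin.val_mk]; omega)]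
          rw [Pi.smul_apply, e1, smul_eq_mul, mul_one]
          show v x i = nth (v x) (((⟨(i:ℕ)-3, hlt⟩ : Fin (n-3)):ℕ) + 3)
          rw [← nth_fin (v x) i]
          congr 1
          simp only [Fin.val_mk]; omega
        · intro b _ hb
          have e0 : famC n b i = 0 := by
            show (if (i:ℕ) = (b:ℕ) + 3 then (1:ℝ) else 0) = 0
            rw [if_neg (fun he => hb (Fin.ext (by simp only [Fin.val_mk]; omega)))]
          rw [Pi.smul_apply, e0, smul_zero]
        · intro hmem; exact absurd (Finset.mem_univ _) hmem
      · have hz : ∀ b : Fin (n-3), (nth (v x) ((b:ℕ)+3) • famC n b) i = 0 := by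
          intro b
          have e0 : famC n b i = 0 := by
            show (if (i:ℕ) = (b:ℕ) + 3 then (1:ℝ) else 0) = 0
            rw [if_neg (by omega)]
          rw [Pi.smul_apply, e0, smul_zero]
        rw [Finset.sum_eq_zero (fun b _ => hz b)]
        rw [← nth_fin (v x) i]
        have h3 : (i:ℕ) = 0 ∨ (i:ℕ) = 1 ∨ (i:ℕ) = 2 := by omega
        rcases h3 with h|h|h <;> rw [h]
        · exact hz0 x
        · exact hz1 x
        · exact hz2 x
    have hmem : v x ∈ Submodule.span ℝ (Set.range (famC n)) := by
      rw [key]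
      exact Submodule.sum_mem _ (fun l _ => Submodule.smul_mem _ _
        (Submodule.subset_span (Set.mem_range_self l)))
    exact hmem
  · apply Submodule.span_le.2
    rintro _ ⟨l, rfl⟩
    refine Submodule.subset_span ⟨EV n ((l:ℕ)+3), ?_, rfl⟩
    exact EV_mem_charDist hn (by omega) (by have := l.isLt; omega)

lemma finrank_charDist {n : ℕ} (hn : 4 ≤ n) (x : Fin n → ℝ) :
    Module.finrank ℝ (ptSpan (CharDist (chainD n (n-3))) x) = n - 3 := by
  rw [ptSpan_charDist hn x, finrank_span_eq_card (famC_li hn), Fintype.card_fin]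

/-- the linear part of `g₁`. -/
noncomputable def LmG (n : ℕ) : (Fin n → ℝ) →L[ℝ] (Fin n → ℝ) :=
  ContinuousLinearMap.pi (fun i : Fin n =>
    if 1 ≤ (i:ℕ) ∧ (i:ℕ) + 1 ≤ n - 1 then nthCLM n ((i:ℕ)+1) else 0)

lemma LmG_apply {n : ℕ} (y : Fin n → ℝ) (i : Fin n) :
    LmG n y i = if 1 ≤ (i:ℕ) ∧ (i:ℕ) + 1 ≤ n - 1 then nth y ((i:ℕ)+1) else 0 := by
  simp only [LmG, ContinuousLinearMap.pi_apply]
  by_cases h : 1 ≤ (i:ℕ) ∧ (i:ℕ) + 1 ≤ n - 1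
  · rw [if_pos h, if_pos h, nthCLM_apply]
  · rw [if_neg h, if_neg h, ContinuousLinearMap.zero_apply]

lemma chainG₁_eq (n : ℕ) : chainG₁ n = fun y => EV n 0 y + LmG n y := by
  funext y i
  rw [Pi.add_apply, LmG_apply]
  show (if (i:ℕ) = 0 then 1 else if (i:ℕ) + 1 ≤ n - 1 then nth y ((i:ℕ)+1) else 0)
    = (if (i:ℕ) = 0 then 1 else 0) + _
  by_cases h0 : (i:ℕ) = 0
  · rw [if_pos h0, if_pos h0, if_neg (by omega), add_zero]
  · rw [if_neg h0, if_neg h0, zero_add]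
    by_cases h1 : (i:ℕ) + 1 ≤ n - 1
    · rw [if_pos h1, if_pos ⟨by omega, h1⟩]
    · rw [if_neg h1, if_neg (by omega)]

lemma LmG_e2 {n : ℕ} (hn : 4 ≤ n) (x y : Fin n → ℝ) : LmG n (EV n 2 x) = EV n 1 y := by
  funext i
  rw [LmG_apply]
  show _ = if (i:ℕ) = 1 then (1:ℝ) else 0
  by_cases h : 1 ≤ (i:ℕ) ∧ (i:ℕ) + 1 ≤ n - 1
  · rw [if_pos h, nth_EV]
    by_cases h1 : (i:ℕ) = 1
    · rw [if_pos ⟨by omega, by omega⟩, if_pos h1]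
    · rw [if_neg (by omega), if_neg h1]
  · rw [if_neg h, if_neg (by omega)]

lemma vec_eq_sum {n : ℕ} (x u : Fin n → ℝ) : u = ∑ i : Fin n, u i • EV n (i:ℕ) x := by
  funext j
  rw [Finset.sum_apply, Finset.sum_eq_single j]
  · show u j = u j • (if ((j:ℕ) = (j:ℕ)) then (1:ℝ) else 0)
    rw [if_pos rfl, smul_eq_mul, mul_one]
  · intro b _ hb
    show u b • (if ((j:ℕ) = (b:ℕ)) then (1:ℝ) else 0) = 0
    rw [if_neg (fun he => hb (Fin.ext he.symm)), smul_zero]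
  · intro hmem; exact absurd (Finset.mem_univ _) hmem

lemma not_integrable {n : ℕ} (hn : 4 ≤ n) (x₀ : Fin n → ℝ) :
    ¬ ∃ U ∈ nhds x₀, ∃ h : (Fin n → ℝ) → ℝ,
        ContDiffOn ℝ (⊤ : ℕ∞) h U ∧ ∀ x ∈ U, fderiv ℝ h x ≠ 0 ∧
          ∀ v ∈ chainD n (n - 3), fderiv ℝ h x (v x) = 0 := by
  rintro ⟨U, hU, h, hsm, hprop⟩
  have hx₀V : x₀ ∈ interior U := mem_interior_iff_mem_nhds.2 hU
  have hVsub : interior U ⊆ U := interior_subset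
  have hVnhds : interior U ∈ nhds x₀ := isOpen_interior.mem_nhds hx₀V
  have hsmAt : ContDiffAt ℝ (⊤ : ℕ∞) h x₀ :=
    hsm.contDiffAt (Filter.mem_of_superset hVnhds hVsub)
  have hf'd : DifferentiableAt ℝ (fderiv ℝ h) x₀ :=
    (hsmAt.fderiv_right (m := 1) (by rw [one_add_one_eq_two, ← WithTop.coe_ofNat]; exact WithTop.coe_le_coe.2 le_top)).differentiableAt (by simp)
  have hsymm : IsSymmSndFDerivAt ℝ h x₀ := hsmAt.isSymmSndFDerivAt (by rw [minSmoothness_of_isRCLikeNormedField]; rw [← WithTop.coe_ofNat]; exact WithTop.coe_le_coe.2 le_top)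
  -- e_m annihilates dh on V for 2 ≤ m ≤ n-1
  have hEm : ∀ m, 2 ≤ m → m ≤ n - 1 → ∀ x ∈ interior U, fderiv ℝ h x (EV n m x₀) = 0 := by
    intro m h2 h3 x hx
    exact (hprop x (hVsub hx)).2 (EV n m)
      (EV_mem_chainD hn (n-3) m (by omega) (by omega) h3)
  -- second derivative with e_m in second slot vanishes
  have hconst_apply : ∀ c : Fin n → ℝ,
      fderiv ℝ (fun y => fderiv ℝ h y c) x₀ = (fderiv ℝ (fderiv ℝ h) x₀).flip c := by
    intro c
    rw [fderiv_clm_apply hf'd (differentiableAt_const c)]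
    simp
  have hD2m : ∀ m, 2 ≤ m → m ≤ n - 1 → ∀ u : Fin n → ℝ,
      fderiv ℝ (fderiv ℝ h) x₀ u (EV n m x₀) = 0 := by
    intro m h2 h3 u
    have heq : (fun y => fderiv ℝ h y (EV n m x₀)) =ᶠ[nhds x₀] (fun _ => (0:ℝ)) :=
      Filter.eventually_of_mem hVnhds (fun y hy => hEm m h2 h3 y hy)
    have := heq.fderiv_eq (𝕜 := ℝ)
    rw [hconst_apply, fderiv_fun_const] at this
    have h0 : (fderiv ℝ (fderiv ℝ h) x₀).flip (EV n m x₀) = 0 := by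
      rw [this]; rfl
    have := congrArg (fun φ => φ u) h0
    simpa using this
  -- derivative of α := dh(g₁) in direction e₂
  have hα : (fun y => fderiv ℝ h y (chainG₁ n y)) =ᶠ[nhds x₀] (fun _ => (0:ℝ)) :=
    Filter.eventually_of_mem hVnhds (fun y hy =>
      (hprop y (hVsub hy)).2 (chainG₁ n) (g₁_mem_chainD _))
  have hαd : fderiv ℝ (fun y => fderiv ℝ h y (chainG₁ n y)) x₀ = 0 := by
    rw [hα.fderiv_eq, fderiv_fun_const]; rfl
  -- expand α's derivative
  have hsplit : (fun y => fderiv ℝ h y (chainG₁ n y))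
      = fun y => fderiv ℝ h y (EV n 0 x₀) + fderiv ℝ h y (LmG n y) := by
    funext y
    rw [chainG₁_eq n]
    have : EV n 0 y = EV n 0 x₀ := rfl
    rw [← this, ← ContinuousLinearMap.map_add]
  have hterm2 : fderiv ℝ (fun y => fderiv ℝ h y (LmG n y)) x₀
      = (fderiv ℝ h x₀).comp (LmG n) + (fderiv ℝ (fderiv ℝ h) x₀).flip (LmG n x₀) := by
    rw [fderiv_clm_apply hf'd ((LmG n).differentiableAt)]
    rw [(LmG n).fderiv]
  have hkey : fderiv ℝ h x₀ (EV n 1 x₀) = 0 := by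
    have happ := congrArg (fun φ : (Fin n → ℝ) →L[ℝ] ℝ => φ (EV n 2 x₀)) hαd
    rw [hsplit] at happ
    have hd1 : DifferentiableAt ℝ (fun y => fderiv ℝ h y (EV n 0 x₀)) x₀ :=
      (hf'd.clm_apply (differentiableAt_const _))
    have hd2 : DifferentiableAt ℝ (fun y => fderiv ℝ h y (LmG n y)) x₀ :=
      (hf'd.clm_apply ((LmG n).differentiableAt))
    rw [fderiv_fun_add hd1 hd2] at happ
    simp only [ContinuousLinearMap.add_apply, ContinuousLinearMap.zero_apply] at happ
    rw [hconst_apply, hterm2] at happ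
    simp only [ContinuousLinearMap.add_apply, ContinuousLinearMap.flip_apply,
      ContinuousLinearMap.comp_apply] at happ
    -- happ : D2 e₂ e₀ + (dh(Lm e₂) + D2 e₂ (Lm x₀)) = 0
    have h1 : fderiv ℝ (fderiv ℝ h) x₀ (EV n 2 x₀) (EV n 0 x₀) = 0 :=
      (hsymm (EV n 2 x₀) (EV n 0 x₀)).trans (hD2m 2 le_rfl (by omega) (EV n 0 x₀))
    have h2 : fderiv ℝ (fderiv ℝ h) x₀ (EV n 2 x₀) (LmG n x₀) = 0 :=
      (hsymm (EV n 2 x₀) (LmG n x₀)).trans (hD2m 2 le_rfl (by omega) (LmG n x₀))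
    rw [h1, h2, LmG_e2 hn x₀ x₀] at happ
    linarith
  -- all partials ≥ 1 vanish at x₀
  have claim : ∀ i : Fin n, 1 ≤ (i:ℕ) → fderiv ℝ h x₀ (EV n (i:ℕ) x₀) = 0 := by
    intro i hi
    rcases eq_or_lt_of_le hi with he | h2
    · have hi1 : (i:ℕ) = 1 := he.symm
      rw [hi1]; exact hkey
    · exact hEm (i:ℕ) h2 (by have := i.isLt; omega) x₀ hx₀V
  have hLm : fderiv ℝ h x₀ (LmG n x₀) = 0 := by
    have hexp := vec_eq_sum x₀ (LmG n x₀)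
    rw [hexp, map_sum]
    refine Finset.sum_eq_zero (fun i _ => ?_)
    rw [map_smul]
    rcases Nat.eq_zero_or_pos (i:ℕ) with h0 | h1
    · have hz : LmG n x₀ i = 0 := by rw [LmG_apply, if_neg (by omega)]
      rw [hz]; simp
    · rw [claim i h1]; simp
  have hg₁0 : fderiv ℝ h x₀ (chainG₁ n x₀) = 0 :=
    (hprop x₀ (hVsub hx₀V)).2 (chainG₁ n) (g₁_mem_chainD _)
  have hdh0 : fderiv ℝ h x₀ (EV n 0 x₀) = 0 := by
    rw [chainG₁_eq n] at hg₁0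
    simp only [ContinuousLinearMap.map_add] at hg₁0
    rw [hLm, add_zero] at hg₁0
    exact hg₁0
  have hzero : fderiv ℝ h x₀ = 0 := by
    ext u
    rw [ContinuousLinearMap.zero_apply]
    conv_lhs => rw [vec_eq_sum x₀ u]
    rw [map_sum]
    refine Finset.sum_eq_zero (fun i _ => ?_)
    rw [map_smul]
    rcases Nat.eq_zero_or_pos (i:ℕ) with h0 | h1
    · rw [h0, hdh0]; simp
    · rw [claim i h1]; simp
  exact (hprop x₀ (hVsub hx₀V)).1 hzero

/-- For the chained system with `n ≥ 4`, the sequence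
`D₁ = span{g₁, g₂}`, `D_{j+1} = D_j + [D_j, D_j]` satisfies `rank D_j = j + 1`
(for `j = 1, …, n−1`); the last non-full distribution (of corank `1`) has a
non-integrable annihilator, while its characteristic distribution has corank `3`
and its annihilator contains `dz¹` and `dz²`. -/
theorem stmt13 (n : ℕ) (hn : 4 ≤ n) :
    -- rank D_j = j + 1
    (∀ j, 1 ≤ j → j ≤ n - 1 → ∀ x,
        Module.finrank ℝ (ptSpan (chainD n (j - 1)) x) = j + 1) ∧
    -- the last non-full distribution has corank 1 …
    (∀ x, Module.finrank ℝ (ptSpan (chainD n (n - 3)) x) = n - 1) ∧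
    -- … and its annihilator is not integrable: no nonzero exact one-form
    -- annihilates it on any open set
    (∀ x₀ : Fin n → ℝ, ¬ ∃ U ∈ nhds x₀, ∃ h : (Fin n → ℝ) → ℝ,
        ContDiffOn ℝ (⊤ : ℕ∞) h U ∧ ∀ x ∈ U, fderiv ℝ h x ≠ 0 ∧
          ∀ v ∈ chainD n (n - 3), fderiv ℝ h x (v x) = 0) ∧
    -- the characteristic distribution of the corank-1 distribution has corank 3 …
    (∀ x, Module.finrank ℝ (ptSpan (CharDist (chainD n (n - 3))) x) = n - 3) ∧
    -- … and its annihilator contains dz¹ and dz²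
    (∀ v ∈ CharDist (chainD n (n - 3)), ∀ x,
        v x ⟨0, by omega⟩ = 0 ∧ v x ⟨1, by omega⟩ = 0) := by
  refine ⟨?_, ?_, ?_, ?_, ?_⟩
  · intro j hj1 hj2 x
    have e : j + 1 = (j - 1) + 2 := by omega
    rw [e]
    exact finrank_chainD hn (by omega) x
  · intro x
    have e : n - 1 = (n - 3) + 2 := by omega
    rw [e]
    exact finrank_chainD hn (by omega) x
  · exact fun x₀ => not_integrable hn x₀
  · exact fun x => finrank_charDist hn x
  · intro v hv x
    have h := charDist_zero012 hn hv x
    exact ⟨(nth_fin (v x) _).symm.trans h.1, (nth_fin (v x) _).symm.trans h.2.1⟩
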